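/- Consider the five demand points $a_1=(0,0)$, $a_2=(1,0)$, $a_3=(3.25,0)$, $a_4=(5,0)$, $a_5=(6,0)$ in $\mathbb{R}^2$ with Euclidean distance, coverage radius $R = 0.5$ for each point, and interconnection radius $r = 2.5$. Then the three centers $X_1 = (0.5, 0)$, $X_2 = (3, 0)$, $X_3 = (5.5, 0)$ satisfy: $\|X_1 - a_1\| \le R$, $\|X_1 - a_2\| \le R$, $\|X_2 - a_3\| \le R$, $\|X_3 - a_4\| \le R$, $\|X_3 - a_5\| \le R$, $\|X_1 - X_2\| \le r$, and $\|X_2 - X_3\| \le r$; moreover $X_2$ does not belong to the Circle Intersection Point set $\{a_1,\ldots,a_5\} \cup \{(0.5,0),(5.5,0)\}$. -/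

import Mathlib

open Metric Set

noncomputable def pt (x y : ℝ) : EuclideanSpace ℝ (Fin 2) :=
  (EuclideanSpace.equiv (Fin 2) ℝ).symm ![x, y]

@[simp]
lemma pt_apply_zero (x y : ℝ) : pt x y 0 = x := rfl

@[simp]
lemma pt_apply_one (x y : ℝ) : pt x y 1 = y := rfl

lemma pt_sub_pt (x y x' y' : ℝ) : pt x y - pt x' y' = pt (x - x') (y - y') := by
  ext i
  fin_cases i <;> rfl

lemma norm_pt (x y : ℝ) : ‖pt x y‖ = √(x ^ 2 + y ^ 2) := by
  simp [EuclideanSpace.norm_eq, Fin.sum_univ_two]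

lemma pt_inj {x y x' y' : ℝ} : pt x y = pt x' y' ↔ x = x' ∧ y = y' := by
  refine ⟨fun h => ⟨by simpa using congrArg (· 0) h, by simpa using congrArg (· 1) h⟩, ?_⟩
  rintro ⟨rfl, rfl⟩
  rfl

lemma norm_pt_sub_pt_of_snd_eq (x x' y : ℝ) : ‖pt x y - pt x' y‖ = |x - x'| := by
  rw [pt_sub_pt, norm_pt, sub_self, zero_pow two_ne_zero, add_zero, Real.sqrt_sq_eq_abs]

theorem stmt10 :
    let a₁ := pt 0 0
    let a₂ := pt 1 0
    let a₃ := pt 3.25 0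
    let a₄ := pt 5 0
    let a₅ := pt 6 0
    let X₁ := pt 0.5 0
    let X₂ := pt 3 0
    let X₃ := pt 5.5 0
    let R : ℝ := 0.5
    let r : ℝ := 2.5
    ‖X₁ - a₁‖ ≤ R ∧ ‖X₁ - a₂‖ ≤ R ∧ ‖X₂ - a₃‖ ≤ R ∧ ‖X₃ - a₄‖ ≤ R ∧ ‖X₃ - a₅‖ ≤ R ∧
      ‖X₁ - X₂‖ ≤ r ∧ ‖X₂ - X₃‖ ≤ r ∧
      X₂ ∉ ({a₁, a₂, a₃, a₄, a₅, pt 0.5 0, pt 5.5 0} :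
        Set (EuclideanSpace ℝ (Fin 2))) := by
  intro a₁ a₂ a₃ a₄ a₅ X₁ X₂ X₃ R r
  simp only [a₁, a₂, a₃, a₄, a₅, X₁, X₂, X₃, R, r, norm_pt_sub_pt_of_snd_eq, mem_insert_iff,
    mem_singleton_iff, pt_inj]
  norm_num [abs_le]
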